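/- Define branching probabilities P_b(s) = β P_e(s) / P_w(s) at every internal-depth node s, where P_w is the weighted-probability recursion (P_w(s) = P_e(s) at depth D, P_w(s) = β P_e(s) + (1-β)∏_j P_w(sj) otherwise). Consider the random tree generated by: starting from the root, each examined node s at depth < D is made a leaf with probability P_b(s) and otherwise all m children are added and subsequently examined; nodes at depth D are always leaves. Then the probability that this procedure produces a given tree T ∈ 𝒯(D) equals π_D(T) ∏_{s ∈ leaves(T)} P_e(s) / P_w(root), i.e., the tree is a sample from the posterior π(T|x). -/
import Mathlib


inductive PTree (m : ℕ) : Type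
  | leaf : PTree m
  | node (c : Fin m → PTree m) : PTree m

namespace PTree

def depth {m : ℕ} : PTree m → ℕ
  | leaf => 0
  | node c => (Finset.univ.sup fun j => depth (c j)) + 1

def numLeaves {m : ℕ} : PTree m → ℕ
  | leaf => 1
  | node c => ∑ j, numLeaves (c j)

def leavesAt {m : ℕ} : ℕ → PTree m → ℕ
  | 0, leaf => 1
  | 0, node _ => 0
  | _ + 1, leaf => 0
  | d + 1, node c => ∑ j, leavesAt d (c j)

noncomputable def prior {m : ℕ} (α β : ℝ) (D : ℕ) (T : PTree m) : ℝ :=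
  α ^ (numLeaves T - 1) * β ^ (numLeaves T - leavesAt D T)

def leafList {m : ℕ} : PTree m → List (List (Fin m))
  | leaf => [[]]
  | node c => (List.finRange m).flatMap fun j => (leafList (c j)).map fun u => j :: u

end PTree

/-- Weighted probabilities of the CCTW recursion; first argument is the remaining depth. -/
noncomputable def Pw {m : ℕ} (β : ℝ) (Pe : List (Fin m) → ℝ) : ℕ → List (Fin m) → ℝ
  | 0, s => Pe s
  | d + 1, s => β * Pe s + (1 - β) * ∏ j, Pw β Pe d (s ++ [j])

/-- Probability that the branching procedure with branching probabilities
`P_b(s) = β Pe(s) / Pw(s)` generates a given tree: at remaining depth `0` the node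
must be a leaf; at positive remaining depth the node is a leaf with probability
`P_b(s)` and otherwise all `m` children are generated independently. -/
noncomputable def genProb {m : ℕ} (β : ℝ) (Pe : List (Fin m) → ℝ) :
    ℕ → PTree m → List (Fin m) → ℝ
  | 0, PTree.leaf, _ => 1
  | 0, PTree.node _, _ => 0
  | d + 1, PTree.leaf, s => β * Pe s / Pw β Pe (d + 1) s
  | d + 1, PTree.node c, s =>
      (1 - β * Pe s / Pw β Pe (d + 1) s) * ∏ j, genProb β Pe d (c j) (s ++ [j])

section Aux

variable {m : ℕ}

lemma PTree.one_le_numLeaves (hm : 0 < m) (T : PTree m) : 1 ≤ T.numLeaves := by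
  induction T with
  | leaf => simp [PTree.numLeaves]
  | node c ih =>
    calc 1 ≤ (c ⟨0, hm⟩).numLeaves := ih _
    _ ≤ ∑ j, (c j).numLeaves :=
        Finset.single_le_sum (f := fun j => (c j).numLeaves)
          (fun j _ => Nat.zero_le _) (Finset.mem_univ _)

lemma prod_leafList_node (c : Fin m → PTree m) (f : List (Fin m) → ℝ) :
    (((PTree.node c).leafList).map f).prod
      = ∏ j, (((c j).leafList).map fun u => f (j :: u)).prod := by
  rw [Fin.prod_univ_def]
  simp [PTree.leafList, List.map_flatMap, List.flatMap, List.prod_flatten,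
    List.map_map, Function.comp_def]

lemma PTree.leavesAt_le_numLeaves (d : ℕ) (T : PTree m) : T.leavesAt d ≤ T.numLeaves := by
  induction T generalizing d with
  | leaf => cases d <;> simp [PTree.leavesAt, PTree.numLeaves]
  | node c ih =>
    cases d with
    | zero => simp [PTree.leavesAt, PTree.numLeaves]
    | succ d =>
      simp only [PTree.leavesAt, PTree.numLeaves]
      exact Finset.sum_le_sum fun j _ => ih j d

lemma Pw_pos {β : ℝ} (hβ : β ∈ Set.Ioo (0:ℝ) 1) (Pe : List (Fin m) → ℝ)
    (hPe : ∀ s, 0 < Pe s) : ∀ d s, 0 < Pw β Pe d s := by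
  intro d
  induction d with
  | zero => intro s; simpa [Pw] using hPe s
  | succ d ih =>
    intro s
    have h1 : 0 < β * Pe s := mul_pos hβ.1 (hPe s)
    have h2 : 0 < (1 - β) * ∏ j, Pw β Pe d (s ++ [j]) :=
      mul_pos (by linarith [hβ.2]) (Finset.prod_pos fun j _ => ih _)
    simp only [Pw]; linarith

end Aux

/-- the branching procedure produces tree `T ∈ 𝒯(D)` with probability
`π_D(T) ∏_{s ∈ leaves(T)} Pe(s) / Pw(root)`, i.e. it samples from the posterior. -/
theorem branching_samples_posterior {m : ℕ} (hm : 2 ≤ m) {α β : ℝ}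
    (hβ : β ∈ Set.Ioo (0 : ℝ) 1)
    (hα : α = (1 - β) ^ ((1 : ℝ) / ((m : ℝ) - 1)))
    (D : ℕ) (Pe : List (Fin m) → ℝ) (hPe : ∀ s, 0 < Pe s)
    (T : PTree m) (hT : T.depth ≤ D) :
    genProb β Pe D T []
      = PTree.prior α β D T * ((PTree.leafList T).map Pe).prod / Pw β Pe D [] := by
  have hm0 : 0 < m := by omega
  have hβ1 : (0:ℝ) < 1 - β := by linarith [hβ.2]
  have hα0 : 0 < α := hα ▸ Real.rpow_pos_of_pos hβ1 _
  have hαm : α ^ (m - 1) = 1 - β := by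
    rw [hα, ← Real.rpow_natCast ((1-β) ^ ((1:ℝ)/((m:ℝ)-1))) (m-1), ← Real.rpow_mul hβ1.le]
    have : (1:ℝ)/((m:ℝ)-1) * ((m-1 : ℕ) : ℝ) = 1 := by
      have h1 : ((m-1 : ℕ) : ℝ) = (m:ℝ) - 1 := by
        push_cast [Nat.cast_sub (by omega : 1 ≤ m)]; ring
      have hne : (m:ℝ) - 1 ≠ 0 := by
        have : (2:ℝ) ≤ (m:ℝ) := by exact_mod_cast hm
        linarith
      rw [h1, one_div, inv_mul_cancel₀ hne]
    rw [this, Real.rpow_one]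
  -- generalized claim
  suffices H : ∀ (T : PTree m) (d : ℕ), T.depth ≤ d → ∀ s,
      genProb β Pe d T s
        = PTree.prior α β d T * ((PTree.leafList T).map fun u => Pe (s ++ u)).prod
            / Pw β Pe d s by
    simpa using H T D hT []
  clear hT T
  intro T
  induction T with
  | leaf =>
    intro d hd s
    cases d with
    | zero =>
      have h0 : Pe (s ++ []) = Pe s := by simp
      simp [genProb, PTree.prior, PTree.numLeaves, PTree.leavesAt, PTree.leafList, Pw,
        div_self (hPe s).ne']
    | succ d =>
      simp [genProb, PTree.prior, PTree.numLeaves, PTree.leavesAt, PTree.leafList]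
  | node c ih =>
    intro d hd s
    cases d with
    | zero => exact absurd hd (by simp [PTree.depth])
    | succ d =>
      have hdj : ∀ j, (c j).depth ≤ d := by
        intro j
        have : (Finset.univ.sup fun j => (c j).depth) ≤ d := by
          simpa [PTree.depth] using hd
        exact le_trans (Finset.le_sup (f := fun j => (c j).depth) (Finset.mem_univ j)) this
      have hPwpos := Pw_pos hβ Pe hPe
      have hPws : (0:ℝ) < Pw β Pe (d+1) s := hPwpos _ _
      have hPwj : ∀ j : Fin m, (0:ℝ) < Pw β Pe d (s ++ [j]) := fun j => hPwpos _ _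
      have hprodPw : (0:ℝ) < ∏ j, Pw β Pe d (s ++ [j]) :=
        Finset.prod_pos fun j _ => hPwj j
      -- branching factor
      have hbr : 1 - β * Pe s / Pw β Pe (d+1) s
          = (1 - β) * (∏ j, Pw β Pe d (s ++ [j])) / Pw β Pe (d+1) s := by
        rw [eq_div_iff hPws.ne', sub_mul, div_mul_cancel₀ _ hPws.ne']
        show 1 * Pw β Pe (d+1) s - _ = _
        simp only [Pw]; ring
      -- children
      have hch : ∀ j : Fin m, genProb β Pe d (c j) (s ++ [j])
          = PTree.prior α β d (c j)
            * (((c j).leafList).map fun u => Pe ((s ++ [j]) ++ u)).prod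
            / Pw β Pe d (s ++ [j]) := fun j => ih j d (hdj j) _
      show (1 - β * Pe s / Pw β Pe (d+1) s) * (∏ j, genProb β Pe d (c j) (s ++ [j])) = _
      rw [hbr]
      simp only [hch]
      rw [Finset.prod_div_distrib]
      -- prior identity
      have hLpos : ∀ j : Fin m, 1 ≤ (c j).numLeaves := fun j =>
        PTree.one_le_numLeaves hm0 (c j)
      have hA : ∀ j : Fin m, (c j).leavesAt d ≤ (c j).numLeaves := fun j =>
        PTree.leavesAt_le_numLeaves d (c j)
      have hLm : m ≤ ∑ j, (c j).numLeaves := by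
        calc m = ∑ _j : Fin m, 1 := by simp
        _ ≤ _ := Finset.sum_le_sum fun j _ => hLpos j
      have hprior : (1 - β) * ∏ j, PTree.prior α β d (c j)
          = PTree.prior α β (d+1) (PTree.node c) := by
        simp only [PTree.prior, PTree.numLeaves, PTree.leavesAt]
        rw [Finset.prod_mul_distrib, Finset.prod_pow_eq_pow_sum, Finset.prod_pow_eq_pow_sum]
        rw [Finset.sum_tsub_distrib _ (fun j _ => hLpos j),
            Finset.sum_tsub_distrib _ (fun j _ => hA j)]
        rw [← hαm, ← mul_assoc, ← pow_add]
        congr 2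
        simp
        omega
      -- leaf list identity
      have hleaf : ((PTree.node c).leafList.map fun u => Pe (s ++ u)).prod
          = ∏ j, (((c j).leafList).map fun u => Pe ((s ++ [j]) ++ u)).prod := by
        rw [prod_leafList_node]
        congr 1
        ext j
        congr 1
        ext u
        simp
      rw [hleaf]
      rw [Finset.prod_mul_distrib]
      field_simp
      rw [← hprior]
      ring
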